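/- Let (A₁, B₁, C₁, D₁) and (A₂, B₂, C₂, D₂) be stable unitary realizations with state dimensions n₁ and n₂ respectively and with the same input/output dimension m. Suppose they realize the same function near the origin, i.e. D₁ = D₂ and C₁ A₁^k B₁ = C₂ A₂^k B₂ for every integer k ≥ 0. Then n₁ = n₂ and the two realizations are unitarily equivalent: there exists a unitary n₁×n₂ matrix U such that A₁ U = U A₂, B₁ = U B₂ and C₁ U = C₂. -/

import Mathlib

/-!
Let `R_k := A₁ᵏ B₁` and `S_k := A₂ᵏ B₂`. Stability together with `A Aᴴ + B Bᴴ = 1` makes the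
reachability Gramians `∑ₖ R_k R_kᴴ` and `∑ₖ S_k S_kᴴ` equal to the identity, so a matrix is
determined by its products with the `R_k` (resp. `S_k`). The relations `Aᴴ A + Cᴴ C = 1`,
`Aᴴ B + Cᴴ D = 0`, `Bᴴ B + Dᴴ D = 1` express every Gram block `R_kᴴ R_j` through `D` and the
Markov parameters `C Aⁱ B`, hence `R_kᴴ R_j = S_kᴴ S_j`. The cross Gramian `U := ∑ₖ R_k S_kᴴ`
then satisfies `U S_j = R_j` and `Uᴴ R_j = S_j`, from which `U` is unitary and intertwines the two
realizations.
-/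

open Matrix Filter Topology
open scoped Matrix.Norms.L2Operator

section BanachAlgebra

variable {𝔸 : Type*} [NormedRing 𝔸] [NormedAlgebra ℂ 𝔸] [CompleteSpace 𝔸] {a : 𝔸}

theorem spectralRadius_lt_one_of_forall_norm_lt_one (h : ∀ μ ∈ spectrum ℂ a, ‖μ‖ < 1) :
    spectralRadius ℂ a < 1 := by
  rcases (spectrum ℂ a).eq_empty_or_nonempty with hempty | hne
  · simp [spectralRadius, hempty]
  · exact_mod_cast spectrum.spectralRadius_lt_of_forall_lt_of_nonempty hne
      (r := 1) fun μ hμ => by exact_mod_cast h μ hμ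

theorem exists_norm_pow_le_geometric_of_spectralRadius_lt_one (h : spectralRadius ℂ a < 1) :
    ∃ r : ℝ, 0 ≤ r ∧ r < 1 ∧ ∀ᶠ k in atTop, ‖a ^ k‖ ≤ r ^ k := by
  obtain ⟨r, har, hr1⟩ := ENNReal.lt_iff_exists_nnreal_btwn.mp h
  refine ⟨r, r.coe_nonneg, by exact_mod_cast hr1, ?_⟩
  filter_upwards [(spectrum.pow_nnnorm_pow_one_div_tendsto_nhds_spectralRadius a)
    |>.eventually_lt_const har, eventually_ge_atTop 1] with k hk hk1
  have hroot : ‖a ^ k‖₊ ^ (1 / (k : ℝ)) < r := by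
    rw [← ENNReal.coe_rpow_of_nonneg _ (by positivity)] at hk
    exact_mod_cast hk
  rw [one_div, NNReal.rpow_inv_lt_iff (by positivity), NNReal.rpow_natCast] at hroot
  exact_mod_cast hroot.le

end BanachAlgebra

section HasSum

variable {ι l m n : Type*} [Fintype m]

theorem HasSum.matrix_mul_left {f : ι → Matrix m n ℂ} {S : Matrix m n ℂ} (hf : HasSum f S)
    (M : Matrix l m ℂ) : HasSum (fun i => M * f i) (M * S) :=
  hf.map (mulLeftLinearMap n ℂ M) (continuous_const.matrix_mul continuous_id)

theorem HasSum.matrix_mul_right {f : ι → Matrix l m ℂ} {S : Matrix l m ℂ} (hf : HasSum f S)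
    (M : Matrix m n ℂ) : HasSum (fun i => f i * M) (S * M) :=
  hf.map (mulRightLinearMap l ℂ M) (continuous_id.matrix_mul continuous_const)

end HasSum

namespace Matrix

section Algebraic

variable {l m n n₁ n₂ : Type*} [Fintype m] [Fintype n] [DecidableEq n]
  [Fintype n₁] [DecidableEq n₁] [Fintype n₂] [DecidableEq n₂]
  {A : Matrix n n ℂ} {B : Matrix n m ℂ} {C : Matrix m n ℂ} {D : Matrix m m ℂ}

theorem conjTranspose_mul_pow_succ_mul (h : Aᴴ * B + Cᴴ * D = 0) (j : ℕ) :
    Bᴴ * (A ^ (j + 1) * B) = -(Dᴴ * (C * A ^ j * B)) := by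
  have hBA : Bᴴ * A = -(Dᴴ * C) := by
    simpa [eq_neg_iff_add_eq_zero] using congrArg conjTranspose h
  rw [pow_succ', Matrix.mul_assoc, ← Matrix.mul_assoc Bᴴ, hBA]
  simp only [Matrix.neg_mul, Matrix.mul_assoc]

theorem conjTranspose_pow_succ_mul_mul_pow_succ_mul (h : Aᴴ * A + Cᴴ * C = 1) (k j : ℕ) :
    (A ^ (k + 1) * B)ᴴ * (A ^ (j + 1) * B)
      = (A ^ k * B)ᴴ * (A ^ j * B) - (C * A ^ k * B)ᴴ * (C * A ^ j * B) := by
  calc (A ^ (k + 1) * B)ᴴ * (A ^ (j + 1) * B) = (A ^ k * B)ᴴ * (Aᴴ * A) * (A ^ j * B) := by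
        simp only [pow_succ', conjTranspose_mul, Matrix.mul_assoc]
    _ = _ := by
        rw [eq_sub_of_add_eq h]
        simp only [conjTranspose_mul, Matrix.mul_sub, Matrix.sub_mul, Matrix.mul_one,
          Matrix.mul_assoc]

theorem sum_range_pow_mul_mul_conjTranspose_pow_mul (hAB : A * Aᴴ + B * Bᴴ = 1) (N : ℕ) :
    ∑ k ∈ Finset.range N, A ^ k * B * (A ^ k * B)ᴴ = 1 - A ^ N * (A ^ N)ᴴ := by
  induction N with
  | zero => simp
  | succ N ih =>
    calc ∑ k ∈ Finset.range (N + 1), A ^ k * B * (A ^ k * B)ᴴ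
        = 1 - A ^ N * (A ^ N)ᴴ + A ^ N * (B * Bᴴ) * (A ^ N)ᴴ := by
          rw [Finset.sum_range_succ, ih, conjTranspose_mul]
          simp only [Matrix.mul_assoc]
      _ = 1 - A ^ (N + 1) * (A ^ (N + 1))ᴴ := by
          rw [eq_sub_of_add_eq' hAB, pow_succ, conjTranspose_mul]
          noncomm_ring

theorem eq_of_forall_mul_pow_mul_eq (hG : HasSum (fun k : ℕ => A ^ k * B * (A ^ k * B)ᴴ) 1)
    {X Y : Matrix l n ℂ} (h : ∀ k : ℕ, X * (A ^ k * B) = Y * (A ^ k * B)) : X = Y := by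
  have hX := hG.matrix_mul_left X
  have hY := hG.matrix_mul_left Y
  simp only [← Matrix.mul_assoc] at hX hY
  simp only [Matrix.mul_assoc X, h, ← Matrix.mul_assoc Y] at hX
  simpa only [Matrix.mul_one] using hX.unique hY

theorem mul_pow_mul_eq_of_hasSum {A₁ : Matrix n₁ n₁ ℂ} {B₁ : Matrix n₁ m ℂ}
    {A₂ : Matrix n₂ n₂ ℂ} {B₂ : Matrix n₂ m ℂ} {U : Matrix n₁ n₂ ℂ}
    (hU : HasSum (fun k : ℕ => A₁ ^ k * B₁ * (A₂ ^ k * B₂)ᴴ) U)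
    (hG : HasSum (fun k : ℕ => A₁ ^ k * B₁ * (A₁ ^ k * B₁)ᴴ) 1)
    (hM : ∀ k j : ℕ, (A₂ ^ k * B₂)ᴴ * (A₂ ^ j * B₂) = (A₁ ^ k * B₁)ᴴ * (A₁ ^ j * B₁)) (j : ℕ) :
    U * (A₂ ^ j * B₂) = A₁ ^ j * B₁ := by
  have hUj := hU.matrix_mul_right (A₂ ^ j * B₂)
  have hGj := hG.matrix_mul_right (A₁ ^ j * B₁)
  simp only [Matrix.mul_assoc, hM, Matrix.one_mul] at hUj hGj
  exact hUj.unique hGj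

end Algebraic

section Realization

variable {m n n₁ n₂ : Type*} [Fintype m] [DecidableEq m] [Fintype n] [DecidableEq n]
  [Fintype n₁] [DecidableEq n₁] [Fintype n₂] [DecidableEq n₂]

theorem block_relations_of_fromBlocks_mem_unitaryGroup {A : Matrix n n ℂ} {B : Matrix n m ℂ}
    {C : Matrix m n ℂ} {D : Matrix m m ℂ} (h : fromBlocks A B C D ∈ unitaryGroup (n ⊕ m) ℂ) :
    A * Aᴴ + B * Bᴴ = 1 ∧ Aᴴ * A + Cᴴ * C = 1 ∧ Aᴴ * B + Cᴴ * D = 0 ∧ Bᴴ * B + Dᴴ * D = 1 := by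
  have hrow := mem_unitaryGroup_iff.mp h
  have hcol := mem_unitaryGroup_iff'.mp h
  rw [star_eq_conjTranspose, fromBlocks_conjTranspose, fromBlocks_multiply, ← fromBlocks_one,
    fromBlocks_inj] at hrow hcol
  exact ⟨hrow.1, hcol.1, hcol.2.1, hcol.2.2.2⟩

theorem conjTranspose_pow_mul_mul_pow_mul_eq {A₁ : Matrix n₁ n₁ ℂ} {B₁ : Matrix n₁ m ℂ}
    {C₁ : Matrix m n₁ ℂ} {A₂ : Matrix n₂ n₂ ℂ} {B₂ : Matrix n₂ m ℂ} {C₂ : Matrix m n₂ ℂ}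
    {D : Matrix m m ℂ}
    (hAC₁ : A₁ᴴ * A₁ + C₁ᴴ * C₁ = 1) (hAB₁ : A₁ᴴ * B₁ + C₁ᴴ * D = 0)
    (hBD₁ : B₁ᴴ * B₁ + Dᴴ * D = 1)
    (hAC₂ : A₂ᴴ * A₂ + C₂ᴴ * C₂ = 1) (hAB₂ : A₂ᴴ * B₂ + C₂ᴴ * D = 0)
    (hBD₂ : B₂ᴴ * B₂ + Dᴴ * D = 1)
    (hCAB : ∀ k : ℕ, C₁ * A₁ ^ k * B₁ = C₂ * A₂ ^ k * B₂) (k j : ℕ) :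
    (A₁ ^ k * B₁)ᴴ * (A₁ ^ j * B₁) = (A₂ ^ k * B₂)ᴴ * (A₂ ^ j * B₂) := by
  have hzero : ∀ j : ℕ, (A₁ ^ 0 * B₁)ᴴ * (A₁ ^ j * B₁) = (A₂ ^ 0 * B₂)ᴴ * (A₂ ^ j * B₂) := by
    rintro (_ | j)
    · simp only [pow_zero, Matrix.one_mul, eq_sub_of_add_eq hBD₁, eq_sub_of_add_eq hBD₂]
    · simp only [pow_zero, Matrix.one_mul, conjTranspose_mul_pow_succ_mul hAB₁,
        conjTranspose_mul_pow_succ_mul hAB₂, hCAB]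
  induction k generalizing j with
  | zero => exact hzero j
  | succ k ih =>
    rcases j with _ | j
    · rw [← conjTranspose_inj]
      simpa only [conjTranspose_mul, conjTranspose_conjTranspose] using hzero (k + 1)
    · rw [conjTranspose_pow_succ_mul_mul_pow_succ_mul hAC₁,
        conjTranspose_pow_succ_mul_mul_pow_succ_mul hAC₂, ih, hCAB, hCAB]

theorem summable_pow_mul_mul_conjTranspose_pow_mul {A₁ : Matrix n₁ n₁ ℂ} {A₂ : Matrix n₂ n₂ ℂ}
    (h₁ : spectralRadius ℂ A₁ < 1) (h₂ : spectralRadius ℂ A₂ < 1)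
    (B₁ : Matrix n₁ m ℂ) (B₂ : Matrix n₂ m ℂ) :
    Summable fun k : ℕ => A₁ ^ k * B₁ * (A₂ ^ k * B₂)ᴴ := by
  obtain ⟨r₁, hr₁0, hr₁1, hA₁⟩ := exists_norm_pow_le_geometric_of_spectralRadius_lt_one h₁
  obtain ⟨r₂, hr₂0, hr₂1, hA₂⟩ := exists_norm_pow_le_geometric_of_spectralRadius_lt_one h₂
  have hgeom : Summable fun k : ℕ => ‖B₁‖ * ‖B₂‖ * (r₁ * r₂) ^ k :=
    (summable_geometric_of_lt_one (by positivity) (by nlinarith)).mul_left _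
  refine Summable.of_norm_bounded_eventually_nat hgeom ?_
  filter_upwards [hA₁, hA₂] with k hk₁ hk₂
  calc ‖A₁ ^ k * B₁ * (A₂ ^ k * B₂)ᴴ‖ ≤ ‖A₁ ^ k * B₁‖ * ‖(A₂ ^ k * B₂)ᴴ‖ := l2_opNorm_mul _ _
    _ = ‖A₁ ^ k * B₁‖ * ‖A₂ ^ k * B₂‖ := by rw [l2_opNorm_conjTranspose]
    _ ≤ ‖A₁ ^ k‖ * ‖B₁‖ * (‖A₂ ^ k‖ * ‖B₂‖) :=
        mul_le_mul (l2_opNorm_mul _ _) (l2_opNorm_mul _ _) (norm_nonneg _) (by positivity)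
    _ ≤ r₁ ^ k * ‖B₁‖ * (r₂ ^ k * ‖B₂‖) := by gcongr
    _ = ‖B₁‖ * ‖B₂‖ * (r₁ * r₂) ^ k := by ring

theorem hasSum_pow_mul_mul_conjTranspose_pow_mul {A : Matrix n n ℂ} {B : Matrix n m ℂ}
    (hA : spectralRadius ℂ A < 1) (hAB : A * Aᴴ + B * Bᴴ = 1) :
    HasSum (fun k : ℕ => A ^ k * B * (A ^ k * B)ᴴ) 1 := by
  have htail : Tendsto (fun N : ℕ => A ^ N * (A ^ N)ᴴ) atTop (𝓝 0) := by
    simpa only [Matrix.mul_one] using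
      (summable_pow_mul_mul_conjTranspose_pow_mul hA hA (1 : Matrix n n ℂ) 1).tendsto_atTop_zero
  rw [(summable_pow_mul_mul_conjTranspose_pow_mul hA hA B B).hasSum_iff_tendsto_nat]
  simp only [sum_range_pow_mul_mul_conjTranspose_pow_mul hAB]
  simpa only [sub_zero] using tendsto_const_nhds.sub htail

end Realization

end Matrix

/-- Two stable unitary realizations of the same function are unitarily
equivalent: if `D₁ = D₂` and `C₁ A₁ᵏ B₁ = C₂ A₂ᵏ B₂` for all `k ≥ 0`, then the
state dimensions agree and there is a unitary `U` with `A₁ U = U A₂`, `B₁ = U B₂`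
and `C₁ U = C₂`. -/
theorem stmt_13 {n₁ n₂ m : ℕ}
    (A₁ : Matrix (Fin n₁) (Fin n₁) ℂ) (B₁ : Matrix (Fin n₁) (Fin m) ℂ)
    (C₁ : Matrix (Fin m) (Fin n₁) ℂ) (D₁ : Matrix (Fin m) (Fin m) ℂ)
    (A₂ : Matrix (Fin n₂) (Fin n₂) ℂ) (B₂ : Matrix (Fin n₂) (Fin m) ℂ)
    (C₂ : Matrix (Fin m) (Fin n₂) ℂ) (D₂ : Matrix (Fin m) (Fin m) ℂ)
    (h₁_unitary : fromBlocks A₁ B₁ C₁ D₁ ∈ Matrix.unitaryGroup (Fin n₁ ⊕ Fin m) ℂ)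
    (h₁_stable : ∀ μ ∈ spectrum ℂ A₁, ‖μ‖ < 1)
    (h₂_unitary : fromBlocks A₂ B₂ C₂ D₂ ∈ Matrix.unitaryGroup (Fin n₂ ⊕ Fin m) ℂ)
    (h₂_stable : ∀ μ ∈ spectrum ℂ A₂, ‖μ‖ < 1)
    (hD : D₁ = D₂)
    (hCAB : ∀ k : ℕ, C₁ * A₁ ^ k * B₁ = C₂ * A₂ ^ k * B₂) :
    n₁ = n₂ ∧
      ∃ U : Matrix (Fin n₁) (Fin n₂) ℂ,
        Uᴴ * U = 1 ∧ U * Uᴴ = 1 ∧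
        A₁ * U = U * A₂ ∧ B₁ = U * B₂ ∧ C₁ * U = C₂ := by
  subst hD
  obtain ⟨hAA₁, hAC₁, hAB₁, hBD₁⟩ := block_relations_of_fromBlocks_mem_unitaryGroup h₁_unitary
  obtain ⟨hAA₂, hAC₂, hAB₂, hBD₂⟩ := block_relations_of_fromBlocks_mem_unitaryGroup h₂_unitary
  have hρ₁ := spectralRadius_lt_one_of_forall_norm_lt_one h₁_stable
  have hρ₂ := spectralRadius_lt_one_of_forall_norm_lt_one h₂_stable
  have hG₁ := hasSum_pow_mul_mul_conjTranspose_pow_mul hρ₁ hAA₁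
  have hG₂ := hasSum_pow_mul_mul_conjTranspose_pow_mul hρ₂ hAA₂
  have hM := conjTranspose_pow_mul_mul_pow_mul_eq hAC₁ hAB₁ hBD₁ hAC₂ hAB₂ hBD₂ hCAB
  obtain ⟨U, hU⟩ := summable_pow_mul_mul_conjTranspose_pow_mul hρ₁ hρ₂ B₁ B₂
  have hUH : HasSum (fun k : ℕ => A₂ ^ k * B₂ * (A₁ ^ k * B₁)ᴴ) Uᴴ := by
    simpa only [conjTranspose_mul, conjTranspose_conjTranspose, Matrix.mul_assoc]
      using hU.matrix_conjTranspose
  have hU₁ := mul_pow_mul_eq_of_hasSum hU hG₁ fun k j => (hM k j).symm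
  have hU₂ := mul_pow_mul_eq_of_hasSum hUH hG₂ hM
  have hUU : Uᴴ * U = 1 := eq_of_forall_mul_pow_mul_eq hG₂ fun j => by
    rw [Matrix.mul_assoc, hU₁, hU₂, Matrix.one_mul]
  have hUU' : U * Uᴴ = 1 := eq_of_forall_mul_pow_mul_eq hG₁ fun j => by
    rw [Matrix.mul_assoc, hU₂, hU₁, Matrix.one_mul]
  refine ⟨by simpa using square_of_invertible U Uᴴ hUU' hUU, U, hUU, hUU', ?_,
    by simpa using (hU₁ 0).symm, ?_⟩
  · refine eq_of_forall_mul_pow_mul_eq hG₂ fun j => ?_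
    rw [Matrix.mul_assoc, hU₁, Matrix.mul_assoc U, ← Matrix.mul_assoc A₂, ← pow_succ', hU₁,
      pow_succ', Matrix.mul_assoc]
  · refine eq_of_forall_mul_pow_mul_eq hG₂ fun j => ?_
    rw [Matrix.mul_assoc, hU₁, ← Matrix.mul_assoc, ← Matrix.mul_assoc, hCAB, Matrix.mul_assoc]
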